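/- Let R be a commutative ring and l ≥ 2. In Sp(2l,R), let x_{α}(t) = I + t·E_{l,2l} and x_{−α}(t) = I + t·E_{2l,l} denote the long simple root unipotents. Then: (i) for every t ∈ R and u ∈ U(2l,R) there exist u' ∈ U(2l,R) and s, s' ∈ R with x_{−α}(t)·u = u'·x_{−α}(s)·x_{α}(s'); (ii) for every t ∈ R and v ∈ U⁻(2l,R) there exist v' ∈ U⁻(2l,R) and s, s' ∈ R with x_{α}(t)·v = v'·x_{α}(s)·x_{−α}(s'); (iii) for every t ∈ R, u ∈ U(2l,R), v ∈ U⁻(2l,R) there exist u' ∈ U(2l,R), v' ∈ U⁻(2l,R) and s, s' ∈ R with x_{−α}(t)·u·v = u'·v'·x_{α}(s)·x_{−α}(s'). (This is Lemma 3.4(a) of the paper in the case Φ = C_l, transported to the symplectic group.) -/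

import Mathlib

open Matrix

/-- A vector is *unimodular* if its entries generate the unit ideal of `R`. -/
def Unimodular (R : Type*) [CommRing R] {ι : Type*} (v : ι → R) : Prop :=
  Ideal.span (Set.range v) = ⊤

/-- `sr(R) ≤ k`: for every `m ≥ k`, every unimodular column of height `m + 1` is stable. -/
def SRleq (R : Type*) [CommRing R] (k : ℕ) : Prop :=
  ∀ m : ℕ, k ≤ m → ∀ a : Fin (m + 1) → R, Unimodular R a →
    ∃ b : Fin m → R,
      Unimodular R fun i : Fin m => a i.castSucc + b i * a (Fin.last m)

/-- `𝔏(a)`: the intersection of all maximal ideals containing every entry of `a`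
(`⊤ = R` if there is no such maximal ideal). -/
def Lideal (R : Type*) [CommRing R] {ι : Type*} (a : ι → R) : Ideal R :=
  sInf {I : Ideal R | I.IsMaximal ∧ ∀ i, a i ∈ I}

/-- `asr(R) ≤ k`: the absolute stable rank condition. -/
def ASRleq (R : Type*) [CommRing R] (k : ℕ) : Prop :=
  ∀ m : ℕ, k ≤ m → ∀ a : Fin (m + 1) → R,
    ∃ b : Fin m → R,
      Lideal R (fun i : Fin m => a i.castSucc + b i * a (Fin.last m)) = Lideal R a

/-- The set of elementary transvections `1 + t·E i j`, `i ≠ j`, viewed inside `GL`. -/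
def ElemGen (R : Type*) [CommRing R] (ι : Type*) [Fintype ι] [DecidableEq ι] :
    Set (Matrix ι ι R)ˣ :=
  {u | ∃ i j : ι, i ≠ j ∧ ∃ t : R, (u : Matrix ι ι R) = 1 + Matrix.single i j t}

/-- The elementary subgroup `E(ι, R) ≤ GL(ι, R)`. -/
def Esubgroup (R : Type*) [CommRing R] (ι : Type*) [Fintype ι] [DecidableEq ι] :
    Subgroup (Matrix ι ι R)ˣ :=
  Subgroup.closure (ElemGen R ι)

/-- Generators of `Ẽ(n, R)`: elementary transvections, mixed commutators `[a, g]` with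
`a ∈ E(n,R)`, `g ∈ GL(n,R)`, and elements `(1 + xy)(1 + yx)⁻¹` with `y = diag(ξ,1,…,1)`. -/
def EtildeGen (R : Type*) [CommRing R] (n : ℕ) : Set (Matrix (Fin n) (Fin n) R)ˣ :=
  ElemGen R (Fin n) ∪
  {w | ∃ a ∈ Esubgroup R (Fin n), ∃ g : (Matrix (Fin n) (Fin n) R)ˣ,
        w = a * g * a⁻¹ * g⁻¹} ∪
  {w | ∃ (ξ : R) (x : Matrix (Fin n) (Fin n) R) (p q : (Matrix (Fin n) (Fin n) R)ˣ),
        (p : Matrix (Fin n) (Fin n) R)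
          = 1 + x * Matrix.diagonal (fun i : Fin n => if (i : ℕ) = 0 then ξ else 1) ∧
        (q : Matrix (Fin n) (Fin n) R)
          = 1 + Matrix.diagonal (fun i : Fin n => if (i : ℕ) = 0 then ξ else 1) * x ∧
        w = p * q⁻¹}

/-- `Ẽ(n, R)`: the normal closure in `GL(n, R)` of the subgroup generated by `EtildeGen`. -/
def Etilde (R : Type*) [CommRing R] (n : ℕ) : Subgroup (Matrix (Fin n) (Fin n) R)ˣ :=
  Subgroup.normalClosure (EtildeGen R n)

/-- Stabilization `GL(n,R) → GL(n+1,R)`, `g ↦ diag(g, 1)`. -/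
def stabGL (R : Type*) [CommRing R] {n : ℕ} (g : (Matrix (Fin n) (Fin n) R)ˣ) :
    (Matrix (Fin (n + 1)) (Fin (n + 1)) R)ˣ where
  val := (fromBlocks g.val 0 0 (1 : Matrix (Fin 1) (Fin 1) R)).submatrix
      finSumFinEquiv.symm finSumFinEquiv.symm
  inv := (fromBlocks g.inv 0 0 (1 : Matrix (Fin 1) (Fin 1) R)).submatrix
      finSumFinEquiv.symm finSumFinEquiv.symm
  val_inv := by
    rw [Matrix.submatrix_mul_equiv, Matrix.fromBlocks_multiply]
    simp [g.val_inv]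
  inv_val := by
    rw [Matrix.submatrix_mul_equiv, Matrix.fromBlocks_multiply]
    simp [g.inv_val]

/-- Generators of the elementary symplectic group, with indices restricted to `S`. -/
def spGen (R : Type*) [CommRing R] {ι : Type*} [DecidableEq ι] (S : Set ι) :
    Set (Matrix (ι ⊕ ι) (ι ⊕ ι) R) :=
  {x | ∃ t : R,
    (∃ i ∈ S, x = 1 + Matrix.single (Sum.inl i) (Sum.inr i) t) ∨
    (∃ i ∈ S, x = 1 + Matrix.single (Sum.inr i) (Sum.inl i) t) ∨
    (∃ i ∈ S, ∃ j ∈ S, i ≠ j ∧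
      x = 1 + (Matrix.single (Sum.inl i) (Sum.inl j) t
             - Matrix.single (Sum.inr j) (Sum.inr i) t)) ∨
    (∃ i ∈ S, ∃ j ∈ S, i ≠ j ∧
      x = 1 + (Matrix.single (Sum.inl i) (Sum.inr j) t
             + Matrix.single (Sum.inl j) (Sum.inr i) t)) ∨
    (∃ i ∈ S, ∃ j ∈ S, i ≠ j ∧
      x = 1 + (Matrix.single (Sum.inr i) (Sum.inl j) t
             + Matrix.single (Sum.inr j) (Sum.inl i) t))}

/-- The elementary symplectic group `Ep` (with indices restricted to `S`),
as a subgroup of `GL(ι ⊕ ι, R)`. -/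
def EpS (R : Type*) [CommRing R] (ι : Type*) [Fintype ι] [DecidableEq ι] (S : Set ι) :
    Subgroup (Matrix (ι ⊕ ι) (ι ⊕ ι) R)ˣ :=
  Subgroup.closure
    {u : (Matrix (ι ⊕ ι) (ι ⊕ ι) R)ˣ | (u : Matrix (ι ⊕ ι) (ι ⊕ ι) R) ∈ spGen R S}

/-- The matrix `J = (0 I; -I 0)`. -/
def Jmat (R : Type*) [CommRing R] (ι : Type*) [DecidableEq ι] : Matrix (ι ⊕ ι) (ι ⊕ ι) R :=
  fromBlocks 0 1 (-1) 0

/-- `x` is symplectic: `xᵀ J x = J`. -/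
def IsSymplectic (R : Type*) [CommRing R] {ι : Type*} [Fintype ι] [DecidableEq ι]
    (x : Matrix (ι ⊕ ι) (ι ⊕ ι) R) : Prop :=
  xᵀ * Jmat R ι * x = Jmat R ι

/-- The hyperbolic embedding `H(g) = diag(g, (gᵀ)⁻¹)`. -/
def Hyp (R : Type*) [CommRing R] {ι : Type*} [Fintype ι] [DecidableEq ι]
    (g : (Matrix ι ι R)ˣ) : (Matrix (ι ⊕ ι) (ι ⊕ ι) R)ˣ where
  val := fromBlocks g.val 0 0 g.invᵀ
  inv := fromBlocks g.inv 0 0 g.valᵀ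
  val_inv := by
    rw [Matrix.fromBlocks_multiply]
    simp [← Matrix.transpose_mul, g.val_inv, g.inv_val]
  inv_val := by
    rw [Matrix.fromBlocks_multiply]
    simp [← Matrix.transpose_mul, g.val_inv, g.inv_val]

/-- `diag(1, g)` as an element of `GL(l + 1, R)`. -/
def diagOneGL (R : Type*) [CommRing R] {l : ℕ} (g : (Matrix (Fin l) (Fin l) R)ˣ) :
    (Matrix (Fin (l + 1)) (Fin (l + 1)) R)ˣ where
  val := (fromBlocks (1 : Matrix (Fin 1) (Fin 1) R) 0 0 g.val).submatrix
      (finSumFinEquiv.trans (finCongr (Nat.add_comm 1 l))).symm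
      (finSumFinEquiv.trans (finCongr (Nat.add_comm 1 l))).symm
  inv := (fromBlocks (1 : Matrix (Fin 1) (Fin 1) R) 0 0 g.inv).submatrix
      (finSumFinEquiv.trans (finCongr (Nat.add_comm 1 l))).symm
      (finSumFinEquiv.trans (finCongr (Nat.add_comm 1 l))).symm
  val_inv := by
    rw [Matrix.submatrix_mul_equiv, Matrix.fromBlocks_multiply]
    simp [g.val_inv]
    ext i j
    simp [Matrix.one_apply]
  inv_val := by
    rw [Matrix.submatrix_mul_equiv, Matrix.fromBlocks_multiply]
    simp [g.inv_val]
    ext i j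
    simp [Matrix.one_apply]

/-- `U(2l, R)`: symplectic matrices with zero lower-left block and
upper unitriangular upper-left block. -/
def Upos (R : Type*) [CommRing R] (l : ℕ) :
    Set (Matrix (Fin l ⊕ Fin l) (Fin l ⊕ Fin l) R) :=
  {x | IsSymplectic R x ∧ (∀ i j, x (Sum.inr i) (Sum.inl j) = 0) ∧
       (∀ i j : Fin l, j < i → x (Sum.inl i) (Sum.inl j) = 0) ∧
       (∀ i, x (Sum.inl i) (Sum.inl i) = 1)}

/-- `U⁻(2l, R)`: symplectic matrices with zero upper-right block and
lower unitriangular upper-left block. -/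
def Uneg (R : Type*) [CommRing R] (l : ℕ) :
    Set (Matrix (Fin l ⊕ Fin l) (Fin l ⊕ Fin l) R) :=
  {x | IsSymplectic R x ∧ (∀ i j, x (Sum.inl i) (Sum.inr j) = 0) ∧
       (∀ i j : Fin l, i < j → x (Sum.inl i) (Sum.inl j) = 0) ∧
       (∀ i, x (Sum.inl i) (Sum.inl i) = 1)}

namespace St10
variable (R : Type*) [CommRing R] (m : ℕ)

def EE (a : R) : Matrix (Fin (m+1)) (Fin (m+1)) R :=
  single (Fin.last m) (Fin.last m) a

def Xp (t : R) : Matrix (Fin (m+1) ⊕ Fin (m+1)) (Fin (m+1) ⊕ Fin (m+1)) R :=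
  1 + single (Sum.inl (Fin.last m)) (Sum.inr (Fin.last m)) t

def Xn (t : R) : Matrix (Fin (m+1) ⊕ Fin (m+1)) (Fin (m+1) ⊕ Fin (m+1)) R :=
  1 + single (Sum.inr (Fin.last m)) (Sum.inl (Fin.last m)) t

variable {R m}

lemma EE_apply (a : R) (i j : Fin (m+1)) :
    EE R m a i j = if i = Fin.last m ∧ j = Fin.last m then a else 0 := by
  by_cases hi : i = Fin.last m <;> by_cases hj : j = Fin.last m <;>
    simp [EE, Matrix.single, hi, hj, eq_comm]

lemma EE_transpose (a : R) : (EE R m a)ᵀ = EE R m a := by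
  ext i j
  rw [Matrix.transpose_apply, EE_apply, EE_apply]
  by_cases hi : i = Fin.last m <;> by_cases hj : j = Fin.last m <;> simp [hi, hj]

lemma EE_mul_EE (a c : R) : EE R m a * EE R m c = EE R m (a * c) :=
  Matrix.single_mul_single_same _ _ _ _ _

lemma EE_add (a c : R) : EE R m a + EE R m c = EE R m (a + c) :=
  (Matrix.single_add _ _ _ _).symm

lemma EE_zero : EE R m (0 : R) = 0 := Matrix.single_zero _ _

lemma mul_EE_apply (M : Matrix (Fin (m+1)) (Fin (m+1)) R) (a : R) (i j : Fin (m+1)) :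
    (M * EE R m a) i j = if j = Fin.last m then M i (Fin.last m) * a else 0 := by
  rcases eq_or_ne j (Fin.last m) with rfl | hj
  · simp [EE]
  · rw [show EE R m a = single (Fin.last m) (Fin.last m) a from rfl,
      Matrix.mul_single_apply_of_ne (hbj := hj)]
    simp [hj]

lemma EE_mul_apply (M : Matrix (Fin (m+1)) (Fin (m+1)) R) (a : R) (i j : Fin (m+1)) :
    (EE R m a * M) i j = if i = Fin.last m then a * M (Fin.last m) j else 0 := by
  rcases eq_or_ne i (Fin.last m) with rfl | hi
  · simp [EE]
  · rw [show EE R m a = single (Fin.last m) (Fin.last m) a from rfl,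
      Matrix.single_mul_apply_of_ne (h := hi)]
    simp [hi]

lemma EE_mul_mul_EE (M : Matrix (Fin (m+1)) (Fin (m+1)) R) (a c : R) :
    EE R m a * M * EE R m c = EE R m (a * M (Fin.last m) (Fin.last m) * c) := by
  ext i j
  rw [mul_EE_apply, EE_apply]
  by_cases hi : i = Fin.last m <;> by_cases hj : j = Fin.last m <;>
    simp [EE_mul_apply, hi, hj]

/-- If `A` is upper unitriangular then `EE a * A = EE a`. -/
lemma EE_mul_upper {A : Matrix (Fin (m+1)) (Fin (m+1)) R}
    (h0 : ∀ i j, j < i → A i j = 0) (h1 : ∀ i, A i i = 1) (a : R) :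
    EE R m a * A = EE R m a := by
  ext i j
  rw [EE_mul_apply, EE_apply]
  by_cases hi : i = Fin.last m <;> by_cases hj : j = Fin.last m
  · simp [hi, hj, h1]
  · have hlt : j < Fin.last m := lt_of_le_of_ne (Fin.le_last j) hj
    simp [hi, hj, h0 _ _ hlt]
  · simp [hi, hj]
  · simp [hi, hj]

/-- If `A` is lower unitriangular then `A * EE a = EE a`. -/
lemma lower_mul_EE {A : Matrix (Fin (m+1)) (Fin (m+1)) R}
    (h0 : ∀ i j, i < j → A i j = 0) (h1 : ∀ i, A i i = 1) (a : R) :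
    A * EE R m a = EE R m a := by
  ext i j
  rw [mul_EE_apply, EE_apply]
  by_cases hi : i = Fin.last m <;> by_cases hj : j = Fin.last m
  · simp [hi, hj, h1]
  · simp [hi, hj]
  · have hlt : i < Fin.last m := lt_of_le_of_ne (Fin.le_last i) hi
    simp [hi, hj, h0 _ _ hlt]
  · simp [hi, hj]

lemma det_unitriangular {A : Matrix (Fin (m+1)) (Fin (m+1)) R}
    (h0 : ∀ i j, j < i → A i j = 0) (h1 : ∀ i, A i i = 1) : IsUnit A.det := by
  have hbt : A.BlockTriangular id := fun i j hij => h0 i j hij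
  rw [Matrix.det_of_upperTriangular hbt]
  simp [h1]

/-- If `A` is upper unitriangular and `Aᵀ * D = 1` then `D * EE a = EE a`. -/
lemma D_mul_EE {A D : Matrix (Fin (m+1)) (Fin (m+1)) R}
    (h0 : ∀ i j, j < i → A i j = 0) (h1 : ∀ i, A i i = 1)
    (hAD : Aᵀ * D = 1) (a : R) : D * EE R m a = EE R m a := by
  have hdet : IsUnit (Aᵀ).det := by
    rw [Matrix.det_transpose]; exact det_unitriangular h0 h1
  have hAE : Aᵀ * EE R m a = EE R m a := by
    ext i j
    rw [EE_apply]
    rcases eq_or_ne j (Fin.last m) with rfl | hj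
    · rw [show EE R m a = single (Fin.last m) (Fin.last m) a from rfl,
        Matrix.mul_single_apply_same]
      rcases eq_or_ne i (Fin.last m) with rfl | hi
      · simp [h1]
      · have hlt : i < Fin.last m := lt_of_le_of_ne (Fin.le_last i) hi
        simp [Matrix.transpose_apply, h0 _ _ hlt, hi]
    · rw [show EE R m a = single (Fin.last m) (Fin.last m) a from rfl,
        Matrix.mul_single_apply_of_ne (hbj := hj)]
      simp [hj]
  calc D * EE R m a = (Aᵀ)⁻¹ * (Aᵀ * (D * EE R m a)) :=
        (Matrix.nonsing_inv_mul_cancel_left _ _ hdet).symm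
    _ = (Aᵀ)⁻¹ * (Aᵀ * EE R m a) := by
        rw [← mul_assoc Aᵀ D, hAD, one_mul, hAE]
    _ = EE R m a := Matrix.nonsing_inv_mul_cancel_left _ _ hdet

/-- If `A` is lower unitriangular and `Aᵀ * D = 1` then `EE a * D = EE a`. -/
lemma EE_mul_D {A D : Matrix (Fin (m+1)) (Fin (m+1)) R}
    (h0 : ∀ i j, i < j → A i j = 0) (h1 : ∀ i, A i i = 1)
    (hAD : Aᵀ * D = 1) (a : R) : EE R m a * D = EE R m a := by
  have h0' : ∀ i j, j < i → Aᵀ i j = 0 := fun i j hij => h0 j i hij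
  have h1' : ∀ i, Aᵀ i i = 1 := fun i => h1 i
  have hdet : IsUnit (Aᵀ).det := det_unitriangular h0' h1'
  have hDA : D * Aᵀ = 1 := mul_eq_one_comm.mp hAD
  have hEA : EE R m a * Aᵀ = EE R m a := by
    ext i j
    rw [EE_apply]
    rcases eq_or_ne i (Fin.last m) with rfl | hi
    · rw [show EE R m a = single (Fin.last m) (Fin.last m) a from rfl,
        Matrix.single_mul_apply_same]
      rcases eq_or_ne j (Fin.last m) with rfl | hj
      · simp [h1]
      · have hlt : j < Fin.last m := lt_of_le_of_ne (Fin.le_last j) hj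
        simp [Matrix.transpose_apply, h0 _ _ hlt, hj]
    · rw [show EE R m a = single (Fin.last m) (Fin.last m) a from rfl,
        Matrix.single_mul_apply_of_ne (h := hi)]
      simp [hi]
  calc EE R m a * D = EE R m a * D * Aᵀ * (Aᵀ)⁻¹ :=
        (Matrix.mul_nonsing_inv_cancel_right _ _ hdet).symm
    _ = EE R m a * Aᵀ * (Aᵀ)⁻¹ := by rw [mul_assoc (EE R m a), hDA, mul_one, hEA]
    _ = EE R m a := Matrix.mul_nonsing_inv_cancel_right _ _ hdet

lemma Xn_eq (t : R) : Xn R m t = fromBlocks 1 0 (EE R m t) 1 := by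
  ext i j
  rcases i with i | i <;> rcases j with j | j <;>
    simp [Xn, EE, Matrix.add_apply, Matrix.one_apply, single,
      Sum.inl.injEq, Sum.inr.injEq, eq_comm]

lemma Xp_eq (t : R) : Xp R m t = fromBlocks 1 (EE R m t) 0 1 := by
  ext i j
  rcases i with i | i <;> rcases j with j | j <;>
    simp [Xp, EE, Matrix.add_apply, Matrix.one_apply, single,
      Sum.inl.injEq, Sum.inr.injEq, eq_comm]

lemma Xn_mul (a c : R) : Xn R m a * Xn R m c = Xn R m (a + c) := by
  have h : (Sum.inl (Fin.last m) : Fin (m+1) ⊕ Fin (m+1)) ≠ Sum.inr (Fin.last m) := by simp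
  simp only [Xn, add_mul, mul_add, one_mul, mul_one,
    Matrix.single_mul_single_of_ne a _ _ _ h c, add_zero,
    Matrix.single_add, add_assoc]

lemma Xp_mul (a c : R) : Xp R m a * Xp R m c = Xp R m (a + c) := by
  have h : (Sum.inr (Fin.last m) : Fin (m+1) ⊕ Fin (m+1)) ≠ Sum.inl (Fin.last m) := by simp
  simp only [Xp, add_mul, mul_add, one_mul, mul_one,
    Matrix.single_mul_single_of_ne a _ _ _ h c, add_zero,
    Matrix.single_add, add_assoc]

lemma Xn_zero : Xn R m (0 : R) = 1 := by simp [Xn]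

lemma Xp_zero : Xp R m (0 : R) = 1 := by simp [Xp]

lemma sympl_mul {x y : Matrix (Fin (m+1) ⊕ Fin (m+1)) (Fin (m+1) ⊕ Fin (m+1)) R}
    (hx : IsSymplectic R x) (hy : IsSymplectic R y) : IsSymplectic R (x * y) := by
  unfold IsSymplectic at *
  rw [Matrix.transpose_mul,
    show yᵀ * xᵀ * Jmat R (Fin (m+1)) * (x * y) = yᵀ * (xᵀ * Jmat R (Fin (m+1)) * x) * y by
      noncomm_ring, hx, hy]

lemma sympl_Xn (t : R) : IsSymplectic R (Xn R m t) := by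
  unfold IsSymplectic Jmat
  rw [Xn_eq, fromBlocks_transpose, fromBlocks_multiply, fromBlocks_multiply]
  simp [EE_transpose, EE_mul_EE]

lemma sympl_Xp (t : R) : IsSymplectic R (Xp R m t) := by
  unfold IsSymplectic Jmat
  rw [Xp_eq, fromBlocks_transpose, fromBlocks_multiply, fromBlocks_multiply]
  simp [EE_transpose, EE_mul_EE]

lemma Xp_def (t : R) :
    Xp R m t = 1 + single (Sum.inl (Fin.last m)) (Sum.inr (Fin.last m)) t := rfl

lemma Xn_def (t : R) :
    Xn R m t = 1 + single (Sum.inr (Fin.last m)) (Sum.inl (Fin.last m)) t := rfl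

lemma sympl_AD {A B D : Matrix (Fin (m+1)) (Fin (m+1)) R}
    (hP : IsSymplectic R (fromBlocks A B 0 D)) : Aᵀ * D = 1 := by
  have h := hP
  unfold IsSymplectic Jmat at h
  rw [fromBlocks_transpose, fromBlocks_multiply, fromBlocks_multiply] at h
  have h12 := congrArg Matrix.toBlocks₁₂ h
  simpa using h12

lemma sympl_AD' {A C D : Matrix (Fin (m+1)) (Fin (m+1)) R}
    (hP : IsSymplectic R (fromBlocks A 0 C D)) : Aᵀ * D = 1 := by
  have h := hP
  unfold IsSymplectic Jmat at h
  rw [fromBlocks_transpose, fromBlocks_multiply, fromBlocks_multiply] at h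
  have h12 := congrArg Matrix.toBlocks₁₂ h
  simpa using h12

lemma core1 (t : R) (A B D : Matrix (Fin (m+1)) (Fin (m+1)) R)
    (h0 : ∀ i j, j < i → A i j = 0) (h1 : ∀ i, A i i = 1)
    (hP : IsSymplectic R (fromBlocks A B 0 D)) :
    ∃ u' ∈ Upos R (m+1),
      Xn R m t * fromBlocks A B 0 D =
        u' * Xn R m t * Xp R m (B (Fin.last m) (Fin.last m)) := by
  have hAD : Aᵀ * D = 1 := sympl_AD hP
  have hEtA : ∀ a : R, EE R m a * A = EE R m a := EE_mul_upper h0 h1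
  have hDE : ∀ a : R, D * EE R m a = EE R m a := D_mul_EE h0 h1 hAD
  set b := B (Fin.last m) (Fin.last m) with hb
  have key : Xn R m t * fromBlocks A B 0 D * Xp R m (-b) * Xn R m (-t) =
      fromBlocks (A + (A * EE R m (-b) + B) * EE R m (-t))
                 (A * EE R m (-b) + B)
                 0
                 (EE R m t * A * EE R m (-b) + (EE R m t * B + D)) := by
    rw [Xn_eq, Xp_eq, Xn_eq, fromBlocks_multiply, fromBlocks_multiply, fromBlocks_multiply]
    simp only [one_mul, mul_one, zero_mul, mul_zero, add_zero, zero_add]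
    rw [Matrix.fromBlocks_inj]
    refine ⟨rfl, rfl, ?_, rfl⟩
    rw [hEtA t, add_mul, add_mul, EE_mul_EE, EE_mul_EE, EE_mul_mul_EE, hDE]
    simp only [EE_add]
    rw [← EE_zero]
    exact congrArg (EE R m) (by ring)
  refine ⟨Xn R m t * fromBlocks A B 0 D * Xp R m (-b) * Xn R m (-t),
    ⟨sympl_mul (sympl_mul (sympl_mul (sympl_Xn t) hP) (sympl_Xp (-b))) (sympl_Xn (-t)),
     ?_, ?_, ?_⟩, ?_⟩
  · intro i j
    rw [key]
    simp
  · intro i j hij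
    have hj : j ≠ Fin.last m := ne_of_lt (lt_of_lt_of_le hij (Fin.le_last i))
    rw [key, Matrix.fromBlocks_apply₁₁, Matrix.add_apply, mul_EE_apply]
    simp [hj, h0 i j hij]
  · intro i
    rw [key, Matrix.fromBlocks_apply₁₁, Matrix.add_apply, mul_EE_apply]
    rcases eq_or_ne i (Fin.last m) with rfl | hi
    · rw [if_pos rfl, Matrix.add_apply, mul_EE_apply, if_pos rfl, h1, ← hb]
      ring
    · simp [hi, h1]
  · have e1 : Xn R m (-t) * Xn R m t = 1 := by rw [Xn_mul, neg_add_cancel, Xn_zero]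
    have e2 : Xp R m (-b) * Xp R m b = 1 := by rw [Xp_mul, neg_add_cancel, Xp_zero]
    symm
    calc Xn R m t * fromBlocks A B 0 D * Xp R m (-b) * Xn R m (-t) * Xn R m t * Xp R m b
        = Xn R m t * fromBlocks A B 0 D * Xp R m (-b) * (Xn R m (-t) * Xn R m t) * Xp R m b := by
          rw [mul_assoc (Xn R m t * fromBlocks A B 0 D * Xp R m (-b))]
      _ = Xn R m t * fromBlocks A B 0 D * (Xp R m (-b) * Xp R m b) := by
          rw [e1, mul_one, mul_assoc]
      _ = Xn R m t * fromBlocks A B 0 D := by rw [e2, mul_one]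

lemma core2 (t : R) (A C D : Matrix (Fin (m+1)) (Fin (m+1)) R)
    (h0 : ∀ i j, i < j → A i j = 0) (h1 : ∀ i, A i i = 1)
    (hP : IsSymplectic R (fromBlocks A 0 C D)) :
    ∃ v' ∈ Uneg R (m+1),
      Xp R m t * fromBlocks A 0 C D =
        v' * Xp R m t * Xn R m (C (Fin.last m) (Fin.last m)) := by
  have hAD : Aᵀ * D = 1 := sympl_AD' hP
  have hAE : ∀ a : R, A * EE R m a = EE R m a := lower_mul_EE h0 h1
  have hED : ∀ a : R, EE R m a * D = EE R m a := EE_mul_D h0 h1 hAD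
  set c := C (Fin.last m) (Fin.last m) with hc
  have key : Xp R m t * fromBlocks A 0 C D * Xn R m (-c) * Xp R m (-t) =
      fromBlocks (A + EE R m t * C + EE R m (t * -c))
                 0
                 (C + D * EE R m (-c))
                 ((C + D * EE R m (-c)) * EE R m (-t) + D) := by
    rw [Xp_eq, Xn_eq, Xp_eq, fromBlocks_multiply, fromBlocks_multiply, fromBlocks_multiply]
    simp only [one_mul, mul_one, zero_mul, mul_zero, add_zero, zero_add]
    rw [hED t, Matrix.fromBlocks_inj]
    refine ⟨by rw [EE_mul_EE], ?_, rfl, rfl⟩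
    rw [add_mul, add_mul, hAE, EE_mul_EE, EE_mul_EE, EE_mul_mul_EE]
    simp only [EE_add]
    rw [← EE_zero]
    exact congrArg (EE R m) (by ring)
  refine ⟨Xp R m t * fromBlocks A 0 C D * Xn R m (-c) * Xp R m (-t),
    ⟨sympl_mul (sympl_mul (sympl_mul (sympl_Xp t) hP) (sympl_Xn (-c))) (sympl_Xp (-t)),
     ?_, ?_, ?_⟩, ?_⟩
  · intro i j
    rw [key]
    simp
  · intro i j hij
    have hi : i ≠ Fin.last m := ne_of_lt (lt_of_lt_of_le hij (Fin.le_last j))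
    rw [key, Matrix.fromBlocks_apply₁₁, Matrix.add_apply, Matrix.add_apply, EE_mul_apply,
      EE_apply]
    simp [hi, h0 i j hij]
  · intro i
    rw [key, Matrix.fromBlocks_apply₁₁, Matrix.add_apply, Matrix.add_apply, EE_mul_apply,
      EE_apply]
    rcases eq_or_ne i (Fin.last m) with rfl | hi
    · rw [if_pos rfl, if_pos ⟨rfl, rfl⟩, h1, ← hc]
      ring
    · simp [hi, h1]
  · have e1 : Xp R m (-t) * Xp R m t = 1 := by rw [Xp_mul, neg_add_cancel, Xp_zero]
    have e2 : Xn R m (-c) * Xn R m c = 1 := by rw [Xn_mul, neg_add_cancel, Xn_zero]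
    symm
    calc Xp R m t * fromBlocks A 0 C D * Xn R m (-c) * Xp R m (-t) * Xp R m t * Xn R m c
        = Xp R m t * fromBlocks A 0 C D * Xn R m (-c) * (Xp R m (-t) * Xp R m t) * Xn R m c := by
          rw [mul_assoc (Xp R m t * fromBlocks A 0 C D * Xn R m (-c))]
      _ = Xp R m t * fromBlocks A 0 C D * (Xn R m (-c) * Xn R m c) := by
          rw [e1, mul_one, mul_assoc]
      _ = Xp R m t * fromBlocks A 0 C D := by rw [e2, mul_one]

lemma lemC (t : R) (v : Matrix (Fin (m+1) ⊕ Fin (m+1)) (Fin (m+1) ⊕ Fin (m+1)) R)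
    (hv : v ∈ Uneg R (m+1)) : Xn R m t * v ∈ Uneg R (m+1) := by
  obtain ⟨hs, hur, htri, hdiag⟩ := hv
  refine ⟨sympl_mul (sympl_Xn t) hs, ?_, ?_, ?_⟩
  · intro i j
    rw [Xn_def, add_mul, one_mul, Matrix.add_apply,
      Matrix.single_mul_apply_of_ne (h := Sum.inl_ne_inr)]
    simp [hur i j]
  · intro i j hij
    rw [Xn_def, add_mul, one_mul, Matrix.add_apply,
      Matrix.single_mul_apply_of_ne (h := Sum.inl_ne_inr)]
    simp [htri i j hij]
  · intro i
    rw [Xn_def, add_mul, one_mul, Matrix.add_apply,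
      Matrix.single_mul_apply_of_ne (h := Sum.inl_ne_inr)]
    simp [hdiag i]


lemma lemA (t : R) (u : Matrix (Fin (m+1) ⊕ Fin (m+1)) (Fin (m+1) ⊕ Fin (m+1)) R)
    (hu : u ∈ Upos R (m+1)) :
    ∃ u' ∈ Upos R (m+1),
      Xn R m t * u =
        u' * Xn R m t * Xp R m (u (Sum.inl (Fin.last m)) (Sum.inr (Fin.last m))) := by
  obtain ⟨hs, hC, h0, h1⟩ := hu
  have h21 : u.toBlocks₂₁ = 0 := by
    ext i j; simpa [Matrix.toBlocks₂₁] using hC i j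
  have hu_eq : u = fromBlocks u.toBlocks₁₁ u.toBlocks₁₂ 0 u.toBlocks₂₂ := by
    rw [← h21, fromBlocks_toBlocks]
  have h0' : ∀ i j, j < i → u.toBlocks₁₁ i j = 0 := fun i j hij => h0 i j hij
  have h1' : ∀ i, u.toBlocks₁₁ i i = 1 := fun i => h1 i
  have hP : IsSymplectic R (fromBlocks u.toBlocks₁₁ u.toBlocks₁₂ 0 u.toBlocks₂₂) :=
    hu_eq ▸ hs
  obtain ⟨u', hmem, heq⟩ := core1 t _ _ _ h0' h1' hP
  refine ⟨u', hmem, ?_⟩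
  have hb : u.toBlocks₁₂ (Fin.last m) (Fin.last m)
      = u (Sum.inl (Fin.last m)) (Sum.inr (Fin.last m)) := rfl
  rw [← hb]
  conv_lhs => rw [hu_eq]
  exact heq

lemma lemB (t : R) (v : Matrix (Fin (m+1) ⊕ Fin (m+1)) (Fin (m+1) ⊕ Fin (m+1)) R)
    (hv : v ∈ Uneg R (m+1)) :
    ∃ v' ∈ Uneg R (m+1),
      Xp R m t * v =
        v' * Xp R m t * Xn R m (v (Sum.inr (Fin.last m)) (Sum.inl (Fin.last m))) := by
  obtain ⟨hs, hB, h0, h1⟩ := hv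
  have h12 : v.toBlocks₁₂ = 0 := by
    ext i j; simpa [Matrix.toBlocks₁₂] using hB i j
  have hv_eq : v = fromBlocks v.toBlocks₁₁ 0 v.toBlocks₂₁ v.toBlocks₂₂ := by
    rw [← h12, fromBlocks_toBlocks]
  have h0' : ∀ i j, i < j → v.toBlocks₁₁ i j = 0 := fun i j hij => h0 i j hij
  have h1' : ∀ i, v.toBlocks₁₁ i i = 1 := fun i => h1 i
  have hP : IsSymplectic R (fromBlocks v.toBlocks₁₁ 0 v.toBlocks₂₁ v.toBlocks₂₂) :=
    hv_eq ▸ hs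
  obtain ⟨v', hmem, heq⟩ := core2 t _ _ _ h0' h1' hP
  refine ⟨v', hmem, ?_⟩
  have hc : v.toBlocks₂₁ (Fin.last m) (Fin.last m)
      = v (Sum.inr (Fin.last m)) (Sum.inl (Fin.last m)) := rfl
  rw [← hc]
  conv_lhs => rw [hv_eq]
  exact heq

end St10

/-- Lemma 3.4(a), case `Φ = C_l`, in the symplectic group;
`l = m + 1 ≥ 2`. With `x_α(t) = 1 + t·E_{l,2l}` and `x_{-α}(t) = 1 + t·E_{2l,l}`:
(i) `x_{-α}(t)·U ⊆ U·x_{-α}·x_α`; (ii) `x_α(t)·U⁻ ⊆ U⁻·x_α·x_{-α}`;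
(iii) `x_{-α}(t)·U·U⁻ ⊆ U·U⁻·x_α·x_{-α}`. -/
theorem statement10 (R : Type*) [CommRing R] (m : ℕ) (hm : 1 ≤ m) :
    (∀ (t : R) (u : Matrix (Fin (m + 1) ⊕ Fin (m + 1)) (Fin (m + 1) ⊕ Fin (m + 1)) R),
      u ∈ Upos R (m + 1) →
      ∃ u' ∈ Upos R (m + 1), ∃ s s' : R,
        (1 + Matrix.single (Sum.inr (Fin.last m)) (Sum.inl (Fin.last m)) t) * u =
          u' * (1 + Matrix.single (Sum.inr (Fin.last m)) (Sum.inl (Fin.last m)) s) *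
            (1 + Matrix.single (Sum.inl (Fin.last m)) (Sum.inr (Fin.last m)) s')) ∧
    (∀ (t : R) (v : Matrix (Fin (m + 1) ⊕ Fin (m + 1)) (Fin (m + 1) ⊕ Fin (m + 1)) R),
      v ∈ Uneg R (m + 1) →
      ∃ v' ∈ Uneg R (m + 1), ∃ s s' : R,
        (1 + Matrix.single (Sum.inl (Fin.last m)) (Sum.inr (Fin.last m)) t) * v =
          v' * (1 + Matrix.single (Sum.inl (Fin.last m)) (Sum.inr (Fin.last m)) s) *
            (1 + Matrix.single (Sum.inr (Fin.last m)) (Sum.inl (Fin.last m)) s')) ∧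
    (∀ (t : R) (u v : Matrix (Fin (m + 1) ⊕ Fin (m + 1)) (Fin (m + 1) ⊕ Fin (m + 1)) R),
      u ∈ Upos R (m + 1) → v ∈ Uneg R (m + 1) →
      ∃ u' ∈ Upos R (m + 1), ∃ v' ∈ Uneg R (m + 1), ∃ s s' : R,
        (1 + Matrix.single (Sum.inr (Fin.last m)) (Sum.inl (Fin.last m)) t) * u * v =
          u' * v' *
            (1 + Matrix.single (Sum.inl (Fin.last m)) (Sum.inr (Fin.last m)) s) *
            (1 + Matrix.single (Sum.inr (Fin.last m)) (Sum.inl (Fin.last m)) s')) := by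
  refine ⟨?_, ?_, ?_⟩
  · intro t u hu
    obtain ⟨u', hmem, heq⟩ := St10.lemA t u hu
    exact ⟨u', hmem, t, u (Sum.inl (Fin.last m)) (Sum.inr (Fin.last m)), heq⟩
  · intro t v hv
    obtain ⟨v', hmem, heq⟩ := St10.lemB t v hv
    exact ⟨v', hmem, t, v (Sum.inr (Fin.last m)) (Sum.inl (Fin.last m)), heq⟩
  · intro t u v hu hv
    obtain ⟨u', hu', h1⟩ := St10.lemA t u hu
    obtain ⟨v₂, hv₂, h2⟩ :=
      St10.lemB (u (Sum.inl (Fin.last m)) (Sum.inr (Fin.last m))) v hv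
    refine ⟨u', hu', St10.Xn R m t * v₂, St10.lemC t v₂ hv₂,
      u (Sum.inl (Fin.last m)) (Sum.inr (Fin.last m)),
      v (Sum.inr (Fin.last m)) (Sum.inl (Fin.last m)), ?_⟩
    show St10.Xn R m t * u * v = _
    calc St10.Xn R m t * u * v
        = u' * St10.Xn R m t *
            St10.Xp R m (u (Sum.inl (Fin.last m)) (Sum.inr (Fin.last m))) * v := by
          rw [h1]
      _ = u' * St10.Xn R m t *
            (St10.Xp R m (u (Sum.inl (Fin.last m)) (Sum.inr (Fin.last m))) * v) := by
          rw [mul_assoc]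
      _ = u' * St10.Xn R m t *
            (v₂ * St10.Xp R m (u (Sum.inl (Fin.last m)) (Sum.inr (Fin.last m))) *
              St10.Xn R m (v (Sum.inr (Fin.last m)) (Sum.inl (Fin.last m)))) := by
          rw [h2]
      _ = u' * (St10.Xn R m t * v₂) *
            St10.Xp R m (u (Sum.inl (Fin.last m)) (Sum.inr (Fin.last m))) *
            St10.Xn R m (v (Sum.inr (Fin.last m)) (Sum.inl (Fin.last m))) := by
          noncomm_ring
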